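/- Modulo P-isomorphism, there are only finitely many nice P-labelled trees; moreover, the number of isomorphism classes of nice P-labelled trees of height at most h (for h ≤ |P|) is bounded by nlt(h) defined by nlt(0) = |P| and nlt(h) = |P| · 2^{nlt(h−1)}. -/

import Mathlib

/-- A `P`-labelled tree: a finite node set `N`, an edge relation `E` such that
`(N,E)` is a (rooted, directed) tree, and a `≤`-monotone labelling `λ : N → P`. -/
structure PTree (P : Type) [PartialOrder P] where
  N : Type
  [fin : Fintype N]
  E : N → N → Prop
  label : N → P
  isTree : ∃ r : N, (∀ n, Relation.ReflTransGen E r n) ∧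
      (∀ n, n ≠ r → ∃! m, E m n) ∧ (∀ n, ¬ E n r)
  mono : ∀ i j, E i j → label i ≤ label j

/-- A `P`-embedding of `T` into `T'`. -/
def TreeEmb {P : Type} [PartialOrder P] (T T' : PTree P) (f : T.N → T'.N) : Prop :=
  (∀ i j, T.E i j → Relation.ReflTransGen T'.E (f i) (f j)) ∧
  (∀ k, T.label k = T'.label (f k))

/-- Two `P`-labelled trees are equivalent if each `P`-embeds into the other. -/
def TreeEquiv {P : Type} [PartialOrder P] (T T' : PTree P) : Prop :=
  (∃ f, TreeEmb T T' f) ∧ (∃ g, TreeEmb T' T g)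

/-- A `P`-labelled tree is strict if labels strictly increase along edges. -/
def StrictTree {P : Type} [PartialOrder P] (T : PTree P) : Prop :=
  ∀ i j, T.E i j → T.label i < T.label j

/-- The subtrees of `T` rooted at `i` and at `j` are `P`-isomorphic. -/
def SubIso {P : Type} [PartialOrder P] (T : PTree P) (i j : T.N) : Prop :=
  ∃ g : {n : T.N // Relation.ReflTransGen T.E i n} ≃
        {n : T.N // Relation.ReflTransGen T.E j n},
    (∀ a b, T.E a.1 b.1 ↔ T.E (g a).1 (g b).1) ∧
    (∀ a, T.label a.1 = T.label (g a).1)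

/-- A `P`-isomorphism between labelled trees. -/
def PIso {P : Type} [PartialOrder P] (T T' : PTree P) : Prop :=
  ∃ e : T.N ≃ T'.N, (∀ i j, T.E i j ↔ T'.E (e i) (e j)) ∧
    (∀ k, T.label k = T'.label (e k))

/-- A strict tree is nice if distinct siblings never carry `P`-isomorphic subtrees. -/
def NiceTree {P : Type} [PartialOrder P] (T : PTree P) : Prop :=
  StrictTree T ∧ ∀ i j k : T.N, T.E k i → T.E k j → i ≠ j → ¬ SubIso T i j

/-- The height of `T` is at most `h`: every `E`-path has at most `h` edges. -/
def HeightLE {P : Type} [PartialOrder P] (T : PTree P) (h : ℕ) : Prop :=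
  ∀ (k : ℕ) (c : ℕ → T.N), (∀ a < k, T.E (c a) (c (a + 1))) → k ≤ h

/-- The bound `nlt` on the number of nice trees of bounded height. -/
def nlt (P : Type) [Fintype P] : ℕ → ℕ
  | 0 => Fintype.card P
  | h + 1 => Fintype.card P * 2 ^ nlt P h

/-!
Encode a node `i` whose subtree has height at most `h` by its code of level `h`: the label of
`i` for `h = 0`, and the label of `i` together with the finite set of level-`(h-1)` codes of its
children otherwise. These codes range over a finite type with exactly `nlt h` elements. By
induction on `h`, equal codes force isomorphic subtrees in nice trees: in a nice tree the children
of a node have pairwise distinct codes (equal codes would give isomorphic sibling subtrees), so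
equality of the code sets is a code-preserving bijection between the children, and the
isomorphisms of the children's subtrees glue. Labels strictly increase along paths, so nice trees
have height at most `|P|`, which gives the first assertion.
-/

open Relation

lemma Set.exists_bijOn_of_image_eq {α β γ : Type*} [Nonempty β] {f : α → γ} {g : β → γ}
    {s : Set α} {t : Set β} (hf : s.InjOn f) (hg : t.InjOn g) (himage : f '' s = g '' t) :
    ∃ e : α → β, Set.BijOn e s t ∧ ∀ x ∈ s, g (e x) = f x := by
  have hmem : ∀ x ∈ s, ∃ y ∈ t, g y = f x := fun x hx => by
    rw [← Set.mem_image, ← himage]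
    exact Set.mem_image_of_mem f hx
  choose! e het hge using hmem
  refine ⟨e, ⟨het, fun x hx x' hx' h => hf hx hx' ?_, fun y hy => ?_⟩, hge⟩
  · rw [← hge x hx, ← hge x' hx', h]
  · obtain ⟨x, hx, hxy⟩ : g y ∈ f '' s := himage ▸ Set.mem_image_of_mem g hy
    exact ⟨x, hx, hg (het x hx) hy (hxy ▸ hge x hx)⟩

lemma exists_fin_representatives_of_code {β α : Type*} [Fintype α] (p : β → Prop)
    (r : β → β → Prop) (c : β → α) (hc : ∀ x y, p x → p y → c x = c y → r x y) :
    ∃ (n : ℕ) (reps : Fin n → β), n ≤ Fintype.card α ∧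
      ∀ x, p x → ∃ a, r x (reps a) := by
  classical
  let S : Finset α := Finset.univ.filter fun z => ∃ x, p x ∧ c x = z
  have hS : ∀ z : S, ∃ x, p x ∧ c x = z := fun z => (Finset.mem_filter.1 z.2).2
  choose rep hrep using hS
  refine ⟨S.card, fun a => rep (S.equivFin.symm a), S.card_le_univ, fun x hx => ?_⟩
  have hx' : c x ∈ S := Finset.mem_filter.2 ⟨Finset.mem_univ _, x, hx, rfl⟩
  refine ⟨S.equivFin ⟨c x, hx'⟩, ?_⟩
  simp only [Equiv.symm_apply_apply]
  exact hc _ _ hx (hrep _).1 (hrep ⟨c x, hx'⟩).2.symm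

def Code (P : Type) : ℕ → Type
  | 0 => P
  | h + 1 => P × Finset (Code P h)

noncomputable instance Code.fintype (P : Type) [Fintype P] : ∀ h, Fintype (Code P h)
  | 0 => ‹Fintype P›
  | h + 1 =>
    letI := Code.fintype P h
    inferInstanceAs (Fintype (P × Finset (Code P h)))

lemma Code.card_eq_nlt (P : Type) [Fintype P] : ∀ h, Fintype.card (Code P h) = nlt P h
  | 0 => rfl
  | h + 1 => by
    rw [nlt, ← Code.card_eq_nlt P h, ← Fintype.card_finset, ← Fintype.card_prod]
    rfl

namespace PTree

variable {P : Type} [PartialOrder P]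

section Structure

variable (T : PTree P)

noncomputable def root : T.N := T.isTree.choose

lemma root_rtg (n : T.N) : ReflTransGen T.E T.root n :=
  T.isTree.choose_spec.1 n

lemma not_edge_root (n : T.N) : ¬ T.E n T.root :=
  T.isTree.choose_spec.2.2 n

variable {T}

lemma eq_of_edge_of_edge {a b n : T.N} (ha : T.E a n) (hb : T.E b n) : a = b := by
  have hn : n ≠ T.root := by rintro rfl; exact T.not_edge_root a ha
  exact (T.isTree.choose_spec.2.1 n hn).unique ha hb

lemma not_transGen_self (n : T.N) : ¬ TransGen T.E n n := by
  induction T.root_rtg n with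
  | refl =>
    rw [TransGen.tail'_iff]
    rintro ⟨b, -, hb⟩
    exact T.not_edge_root b hb
  | @tail m n _ hmn ih =>
    rw [TransGen.tail'_iff]
    rintro ⟨b, hnb, hbn⟩
    rw [eq_of_edge_of_edge hbn hmn] at hnb
    exact ih (TransGen.head' hmn hnb)

lemma not_rtg_of_edge {a b : T.N} (h : T.E a b) : ¬ ReflTransGen T.E b a :=
  fun hba => not_transGen_self a (TransGen.head' h hba)

lemma eq_of_edge_of_rtg {i j₁ j₂ n : T.N} (e₁ : T.E i j₁) (e₂ : T.E i j₂)
    (h₁ : ReflTransGen T.E j₁ n) (h₂ : ReflTransGen T.E j₂ n) : j₁ = j₂ := by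
  induction h₂ with
  | refl =>
    rcases h₁.cases_tail with rfl | ⟨c, hc, ec⟩
    · rfl
    · rw [eq_of_edge_of_edge ec e₂] at hc
      exact (not_rtg_of_edge e₁ hc).elim
  | @tail m n hm hmn ih =>
    rcases h₁.cases_tail with rfl | ⟨c, hc, ec⟩
    · obtain rfl := eq_of_edge_of_edge hmn e₁
      exact (not_rtg_of_edge e₂ hm).elim
    · exact ih (eq_of_edge_of_edge ec hmn ▸ hc)

end Structure

structure IsSubtreeIso (T T' : PTree P) (i : T.N) (i' : T'.N) (f : T.N → T'.N) : Prop where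
  bijOn : Set.BijOn f {n | ReflTransGen T.E i n} {n | ReflTransGen T'.E i' n}
  edge_iff : ∀ a b, ReflTransGen T.E i a → ReflTransGen T.E i b →
    (T.E a b ↔ T'.E (f a) (f b))
  label_eq : ∀ n, ReflTransGen T.E i n → T.label n = T'.label (f n)
  map_root : f i = i'

lemma IsSubtreeIso.subIso {T : PTree P} {i j : T.N} {f : T.N → T.N}
    (hf : IsSubtreeIso T T i j f) : SubIso T i j :=
  ⟨hf.bijOn.equiv f, fun a b => hf.edge_iff a b a.2 b.2, fun a => hf.label_eq a a.2⟩

lemma IsSubtreeIso.pIso {T T' : PTree P} {f : T.N → T'.N}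
    (hf : IsSubtreeIso T T' T.root T'.root f) : PIso T T' := by
  refine ⟨Equiv.ofBijective f ⟨fun a b hab => ?_, fun b => ?_⟩, fun a b => ?_, fun n => ?_⟩
  · exact hf.bijOn.injOn (T.root_rtg a) (T.root_rtg b) hab
  · obtain ⟨a, -, ha⟩ := hf.bijOn.surjOn (T'.root_rtg b)
    exact ⟨a, ha⟩
  · exact hf.edge_iff a b (T.root_rtg a) (T.root_rtg b)
  · exact hf.label_eq n (T.root_rtg n)

section Glue

variable {T T' : PTree P} {i j : T.N} {i' : T'.N} {β : T.N → T'.N} {F : T.N → T.N → T'.N}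

noncomputable def glue (T : PTree P) (i : T.N) (i' : T'.N) (F : T.N → T.N → T'.N) :
    T.N → T'.N := fun n =>
  open Classical in
  if h : ∃ j, T.E i j ∧ ReflTransGen T.E j n then F h.choose n else i'

lemma glue_self : glue T i i' F i = i' :=
  dif_neg fun ⟨_, e, h⟩ => not_rtg_of_edge e h

lemma glue_of_rtg {n : T.N} (e : T.E i j) (h : ReflTransGen T.E j n) :
    glue T i i' F n = F j n := by
  have hex : ∃ j, T.E i j ∧ ReflTransGen T.E j n := ⟨j, e, h⟩
  rw [glue, dif_pos hex, eq_of_edge_of_rtg hex.choose_spec.1 e hex.choose_spec.2 h]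

lemma eq_of_rtg_of_bijOn (hβ : Set.BijOn β {j | T.E i j} {j' | T'.E i' j'}) {j₁ j₂ : T.N}
    {n' : T'.N} (e₁ : T.E i j₁) (e₂ : T.E i j₂) (h₁ : ReflTransGen T'.E (β j₁) n')
    (h₂ : ReflTransGen T'.E (β j₂) n') : j₁ = j₂ :=
  hβ.injOn e₁ e₂ (eq_of_edge_of_rtg (hβ.mapsTo e₁) (hβ.mapsTo e₂) h₁ h₂)

lemma rtg_glue_of_rtg (hF : ∀ j, T.E i j → IsSubtreeIso T T' j (β j) (F j)) {n : T.N}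
    (e : T.E i j) (h : ReflTransGen T.E j n) : ReflTransGen T'.E (β j) (glue T i i' F n) := by
  rw [glue_of_rtg e h]
  exact (hF j e).bijOn.mapsTo h

lemma glue_bijOn (hβ : Set.BijOn β {j | T.E i j} {j' | T'.E i' j'})
    (hF : ∀ j, T.E i j → IsSubtreeIso T T' j (β j) (F j)) :
    Set.BijOn (glue T i i' F) {n | ReflTransGen T.E i n} {n | ReflTransGen T'.E i' n} := by
  have below : ∀ {j n}, T.E i j → ReflTransGen T.E j n →
      ReflTransGen T'.E (β j) (glue T i i' F n) := rtg_glue_of_rtg hF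
  refine ⟨fun n hn => ?_, fun n₁ hn₁ n₂ hn₂ heq => ?_, fun n' hn' => ?_⟩
  · rcases ReflTransGen.cases_head hn with rfl | ⟨j, e, h⟩
    · show ReflTransGen T'.E i' (glue T i i' F i)
      rw [glue_self]
    · exact (below e h).head (hβ.mapsTo e)
  · rcases ReflTransGen.cases_head hn₁ with rfl | ⟨j₁, e₁, h₁⟩ <;>
      rcases ReflTransGen.cases_head hn₂ with rfl | ⟨j₂, e₂, h₂⟩
    · rfl
    · rw [glue_self] at heq
      exact (not_rtg_of_edge (hβ.mapsTo e₂) (heq ▸ below e₂ h₂)).elim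
    · rw [glue_self] at heq
      exact (not_rtg_of_edge (hβ.mapsTo e₁) (heq ▸ below e₁ h₁)).elim
    · obtain rfl := eq_of_rtg_of_bijOn hβ e₁ e₂ (heq ▸ below e₁ h₁) (below e₂ h₂)
      rw [glue_of_rtg e₁ h₁, glue_of_rtg e₁ h₂] at heq
      exact (hF j₁ e₁).bijOn.injOn h₁ h₂ heq
  · rcases ReflTransGen.cases_head hn' with rfl | ⟨j', e', h'⟩
    · exact ⟨i, .refl, glue_self⟩
    · obtain ⟨j, e, rfl⟩ := hβ.surjOn e'
      obtain ⟨n, hn, rfl⟩ := (hF j e).bijOn.surjOn h'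
      exact ⟨n, hn.head e, glue_of_rtg e hn⟩

lemma glue_edge_iff (hβ : Set.BijOn β {j | T.E i j} {j' | T'.E i' j'})
    (hF : ∀ j, T.E i j → IsSubtreeIso T T' j (β j) (F j)) (a b : T.N)
    (ha : ReflTransGen T.E i a) (hb : ReflTransGen T.E i b) :
    T.E a b ↔ T'.E (glue T i i' F a) (glue T i i' F b) := by
  have below : ∀ {j n}, T.E i j → ReflTransGen T.E j n →
      ReflTransGen T'.E (β j) (glue T i i' F n) := rtg_glue_of_rtg hF
  rcases ReflTransGen.cases_head ha with rfl | ⟨j₁, e₁, h₁⟩ <;>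
    rcases ReflTransGen.cases_head hb with rfl | ⟨j₂, e₂, h₂⟩
  · rw [glue_self]
    exact iff_of_false (fun e => not_rtg_of_edge e .refl) (fun e => not_rtg_of_edge e .refl)
  · rw [glue_self, glue_of_rtg e₂ h₂]
    -- both sides say that `b` is the root of its branch
    calc T.E i b ↔ b = j₂ :=
          ⟨fun e => eq_of_edge_of_rtg e e₂ .refl h₂, fun h => h ▸ e₂⟩
      _ ↔ F j₂ b = β j₂ := by
        rw [← (hF j₂ e₂).map_root]
        exact ((hF j₂ e₂).bijOn.injOn.eq_iff h₂ .refl).symm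
      _ ↔ T'.E i' (F j₂ b) := by
        rw [← glue_of_rtg (i' := i') (F := F) e₂ h₂]
        exact ⟨fun h => h ▸ hβ.mapsTo e₂,
          fun e => eq_of_edge_of_rtg e (hβ.mapsTo e₂) .refl (below e₂ h₂)⟩
  · rw [glue_self]
    exact iff_of_false (fun e => not_rtg_of_edge e ha)
      (fun e => not_rtg_of_edge e ((below e₁ h₁).head (hβ.mapsTo e₁)))
  · have same_branch : T.E a b ∨ T'.E (glue T i i' F a) (glue T i i' F b) → j₁ = j₂ := by
      rintro (e | e)
      · exact eq_of_edge_of_rtg e₁ e₂ (h₁.tail e) h₂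
      · exact eq_of_rtg_of_bijOn hβ e₁ e₂ ((below e₁ h₁).tail e) (below e₂ h₂)
    by_cases hj : j₁ = j₂
    · subst hj
      rw [glue_of_rtg e₁ h₁, glue_of_rtg e₁ h₂]
      exact (hF j₁ e₁).edge_iff a b h₁ h₂
    · exact iff_of_false (fun e => hj (same_branch (.inl e))) (fun e => hj (same_branch (.inr e)))

lemma isSubtreeIso_glue (hβ : Set.BijOn β {j | T.E i j} {j' | T'.E i' j'})
    (hF : ∀ j, T.E i j → IsSubtreeIso T T' j (β j) (F j)) (hlabel : T.label i = T'.label i') :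
    IsSubtreeIso T T' i i' (glue T i i' F) where
  bijOn := glue_bijOn hβ hF
  edge_iff := glue_edge_iff hβ hF
  label_eq n hn := by
    rcases ReflTransGen.cases_head hn with rfl | ⟨j, e, h⟩
    · rwa [glue_self]
    · rw [glue_of_rtg e h]
      exact (hF j e).label_eq n h
  map_root := glue_self

end Glue

attribute [local instance] PTree.fin

open Classical in
noncomputable def code (T : PTree P) : (h : ℕ) → T.N → Code P h
  | 0, n => T.label n
  | h + 1, n => (T.label n, (Finset.univ.filter (T.E n)).image (T.code h))

lemma code_succ_eq_iff {T T' : PTree P} {h : ℕ} {i : T.N} {i' : T'.N} :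
    T.code (h + 1) i = T'.code (h + 1) i' ↔
      T.label i = T'.label i' ∧ T.code h '' {j | T.E i j} = T'.code h '' {j' | T'.E i' j'} := by
  change ((_, _) : P × Finset (Code P h)) = (_, _) ↔ _
  rw [Prod.ext_iff, ← Finset.coe_inj]
  simp

def SubtreeHeightLE (T : PTree P) (i : T.N) (h : ℕ) : Prop :=
  ∀ (k : ℕ) (c : ℕ → T.N), c 0 = i → (∀ a < k, T.E (c a) (c (a + 1))) → k ≤ h

lemma SubtreeHeightLE.of_edge {T : PTree P} {i j : T.N} {h : ℕ}
    (hi : SubtreeHeightLE T i (h + 1)) (e : T.E i j) : SubtreeHeightLE T j h := by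
  intro k c hc₀ hc
  have := hi (k + 1) (fun | 0 => i | a + 1 => c a) rfl fun
    | 0, _ => show T.E i (c 0) from hc₀ ▸ e
    | a + 1, ha => hc a (by omega)
  omega

lemma SubtreeHeightLE.not_edge {T : PTree P} {i j : T.N} (hi : SubtreeHeightLE T i 0) :
    ¬ T.E i j := fun e => by
  have := hi 1 (fun | 0 => i | _ => j) rfl fun | 0, _ => e
  omega

lemma subtreeHeightLE_of_heightLE {T : PTree P} {h : ℕ} (hT : HeightLE T h) (i : T.N) :
    SubtreeHeightLE T i h :=
  fun k c _ hc => hT k c hc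

theorem exists_isSubtreeIso_of_code_eq (h : ℕ) :
    ∀ (T T' : PTree P), NiceTree T → NiceTree T' → ∀ (i : T.N) (i' : T'.N),
      SubtreeHeightLE T i h → SubtreeHeightLE T' i' h → T.code h i = T'.code h i' →
      ∃ f, IsSubtreeIso T T' i i' f := by
  induction h with
  | zero =>
    intro T T' _ _ i i' hi hi' hcode
    have hβ : Set.BijOn (fun _ => i') {j | T.E i j} {j' | T'.E i' j'} := by
      rw [Set.eq_empty_of_forall_notMem fun _ => hi.not_edge,
        Set.eq_empty_of_forall_notMem fun _ => hi'.not_edge]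
      exact Set.bijOn_empty _
    exact ⟨_, isSubtreeIso_glue (F := fun _ _ => i') hβ (fun _ e => (hi.not_edge e).elim)
      hcode⟩
  | succ h ih =>
    intro T T' hT hT' i i' hi hi' hcode
    have children_injOn : ∀ (T : PTree P), NiceTree T → ∀ i, SubtreeHeightLE T i (h + 1) →
        Set.InjOn (T.code h) {j | T.E i j} := by
      intro T hT i hi j₁ e₁ j₂ e₂ hcode
      by_contra hne
      obtain ⟨f, hf⟩ := ih T T hT hT j₁ j₂ (hi.of_edge e₁) (hi.of_edge e₂) hcode
      exact hT.2 j₁ j₂ i e₁ e₂ hne hf.subIso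
    have : Nonempty T'.N := ⟨i'⟩
    obtain ⟨hlabel, himage⟩ := code_succ_eq_iff.1 hcode
    obtain ⟨β, hβ, hβcode⟩ := Set.exists_bijOn_of_image_eq (children_injOn T hT i hi)
      (children_injOn T' hT' i' hi') himage
    choose! F hF using fun j (e : T.E i j) => ih T T' hT hT' j (β j) (hi.of_edge e)
      (hi'.of_edge (hβ.mapsTo e)) (hβcode j e).symm
    exact ⟨_, isSubtreeIso_glue hβ hF hlabel⟩

end PTree

lemma StrictTree.heightLE_card {P : Type} [Fintype P] [PartialOrder P] {T : PTree P}
    (hT : StrictTree T) : HeightLE T (Fintype.card P) := by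
  intro k c hc
  have hmono : StrictMonoOn (T.label ∘ c) (Set.Iic k) :=
    strictMonoOn_Iic_of_lt_succ fun a ha => hT _ _ (hc a ha)
  have := Finset.card_le_card_of_injOn (T.label ∘ c) (s := Finset.Iic k) (t := Finset.univ)
    (fun _ _ => Finset.mem_univ _) (by simpa using hmono.injOn)
  rw [Nat.card_Iic, Finset.card_univ] at this
  omega

lemma exists_representatives_of_heightLE {P : Type} [Fintype P] [PartialOrder P] (h : ℕ) :
    ∃ (n : ℕ) (reps : Fin n → PTree P), n ≤ nlt P h ∧
      ∀ T : PTree P, NiceTree T → HeightLE T h → ∃ a, PIso T (reps a) := by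
  obtain ⟨n, reps, hn, hreps⟩ := exists_fin_representatives_of_code
    (fun T : PTree P => NiceTree T ∧ HeightLE T h) PIso (fun T => T.code h T.root)
    fun T T' hT hT' hcode => by
      obtain ⟨f, hf⟩ := PTree.exists_isSubtreeIso_of_code_eq h T T' hT.1 hT'.1 _ _
        (PTree.subtreeHeightLE_of_heightLE hT.2 _) (PTree.subtreeHeightLE_of_heightLE hT'.2 _) hcode
      exact hf.pIso
  exact ⟨n, reps, Code.card_eq_nlt P h ▸ hn, fun T hT hH => hreps T ⟨hT, hH⟩⟩

/-- modulo `P`-isomorphism there are finitely many nice trees;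
moreover for `h ≤ |P|` the number of isomorphism classes of nice trees of
height at most `h` is bounded by `nlt h`. -/
theorem stmt6 (P : Type) [Fintype P] [PartialOrder P] :
    (∃ (n : ℕ) (reps : Fin n → PTree P),
        ∀ T : PTree P, NiceTree T → ∃ a, PIso T (reps a)) ∧
    (∀ h : ℕ, h ≤ Fintype.card P →
      ∃ (n : ℕ) (reps : Fin n → PTree P), n ≤ nlt P h ∧
        ∀ T : PTree P, NiceTree T → HeightLE T h → ∃ a, PIso T (reps a)) := by
  refine ⟨?_, fun h _ => exists_representatives_of_heightLE h⟩
  obtain ⟨n, reps, -, hreps⟩ := exists_representatives_of_heightLE (P := P) (Fintype.card P)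
  exact ⟨n, reps, fun T hT => hreps T hT hT.1.heightLE_card⟩
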